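/- Let G₁ and G₂ be finite simple graphs on vertex types V₁ and V₂, and let G be their fully disconnected disjoint union: the graph on V₁ ⊕ V₂ in which inl a is adjacent to inl b iff a and b are adjacent in G₁, inr a is adjacent to inr b iff a and b are adjacent in G₂, and no vertex inl a is adjacent to any vertex inr b. If G₁ and G₂ are ħ-perfect, then G is ħ-perfect. -/

import Mathlib

open Matrix

/-- A realization of the graph `G` in dimension `d`: a family of Hermitian involutions that
anticommute on edges and commute on non-edges. -/
def IsRealization {V : Type*} (G : SimpleGraph V) (d : ℕ)
    (S : V → Matrix (Fin d) (Fin d) ℂ) : Prop :=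
  (∀ i, (S i).IsHermitian) ∧ (∀ i, S i * S i = 1) ∧
    (∀ i j, G.Adj i j → S i * S j = -(S j * S i)) ∧
    (∀ i j, i ≠ j → ¬G.Adj i j → S i * S j = S j * S i)

/-- The (real) expectation value `ψᴴ A ψ` of a matrix `A` at a vector `ψ`. -/
noncomputable def expectation {d : ℕ} (A : Matrix (Fin d) (Fin d) ℂ) (ψ : Fin d → ℂ) : ℝ :=
  (star ψ ⬝ᵥ (A *ᵥ ψ)).re

/-- The beta value of a realization: supremum over unit vectors of the weighted sum of squared
expectations. -/
noncomputable def betaVal {V : Type*} [Fintype V] {d : ℕ}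
    (S : V → Matrix (Fin d) (Fin d) ℂ) (w : V → ℝ) : ℝ :=
  sSup {r : ℝ | ∃ ψ : Fin d → ℂ, star ψ ⬝ᵥ ψ = 1 ∧
    r = ∑ i, w i * (expectation (S i) ψ) ^ 2}

/-- A finite set of vertices is independent if no two of its members are adjacent. -/
def IsIndepSet {V : Type*} (G : SimpleGraph V) (I : Finset V) : Prop :=
  ∀ a ∈ I, ∀ b ∈ I, ¬G.Adj a b

/-- The weighted independence number. -/
noncomputable def alphaW {V : Type*} [Fintype V] (G : SimpleGraph V) (w : V → ℝ) : ℝ :=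
  sSup {r : ℝ | ∃ I : Finset V, IsIndepSet G I ∧ r = ∑ i ∈ I, w i}

/-- A graph is ħ-perfect if for every realization and every nonnegative weight vector the beta
value equals the weighted independence number. -/
def HbarPerfect {V : Type*} [Fintype V] (G : SimpleGraph V) : Prop :=
  ∀ d : ℕ, 1 ≤ d → ∀ S : V → Matrix (Fin d) (Fin d) ℂ, IsRealization G d S →
    ∀ w : V → ℝ, (∀ i, 0 ≤ w i) → betaVal S w = alphaW G w

/-!
For any graph, `α(G, w) ≤ β_S(w)`: the observables `S i` indexed by an independent set are
pairwise commuting involutions, so they share an eigenvector with eigenvalues `±1`, at which each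
has squared expectation `1`.

Conversely, a realization `S` of the disjoint union restricts to realizations `S₁`, `S₂` of `G₁`
and `G₂`. Splitting the sum over `V₁ ⊕ V₂` gives `β_S(w) ≤ β_{S₁}(w₁) + β_{S₂}(w₂)`, which equals
`α(G₁, w₁) + α(G₂, w₂)` by hypothesis, and this is at most `α(G, w)` because the union of
independent sets of the two sides is independent in `G`.
-/

open scoped ComplexOrder

lemma Matrix.IsHermitian.star_mulVec_dotProduct {n R : Type*} [Fintype n] [CommSemiring R]
    [StarRing R] {A : Matrix n n R} (hA : A.IsHermitian) (ψ φ : n → R) :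
    star (A *ᵥ ψ) ⬝ᵥ φ = star ψ ⬝ᵥ (A *ᵥ φ) := by
  rw [star_mulVec, hA.eq, dotProduct_mulVec]

lemma abs_expectation_le_one {d : ℕ} {A : Matrix (Fin d) (Fin d) ℂ} (hA : A.IsHermitian)
    (hA2 : A * A = 1) {ψ : Fin d → ℂ} (hψ : star ψ ⬝ᵥ ψ = 1) : |expectation A ψ| ≤ 1 := by
  set e := star ψ ⬝ᵥ (A *ᵥ ψ)
  have hAψ : star (A *ᵥ ψ) ⬝ᵥ ψ = e := hA.star_mulVec_dotProduct ψ ψ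
  have hAA : star (A *ᵥ ψ) ⬝ᵥ (A *ᵥ ψ) = 1 := by
    rw [hA.star_mulVec_dotProduct, mulVec_mulVec, hA2, one_mulVec, hψ]
  -- `0 ≤ ‖ψ ∓ Aψ‖² = 2 ∓ 2 ψᴴAψ`
  have hsub : star (ψ - A *ᵥ ψ) ⬝ᵥ (ψ - A *ᵥ ψ) = 2 - 2 * e := by
    simp only [star_sub, sub_dotProduct, dotProduct_sub, hψ, hAψ, hAA, e]; ring
  have hadd : star (ψ + A *ᵥ ψ) ⬝ᵥ (ψ + A *ᵥ ψ) = 2 + 2 * e := by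
    simp only [star_add, add_dotProduct, dotProduct_add, hψ, hAψ, hAA, e]; ring
  have h₁ := (Complex.le_def.1 (hsub ▸ dotProduct_star_self_nonneg (ψ - A *ᵥ ψ))).1
  have h₂ := (Complex.le_def.1 (hadd ▸ dotProduct_star_self_nonneg (ψ + A *ᵥ ψ))).1
  simp only [Complex.zero_re, Complex.sub_re, Complex.add_re, Complex.mul_re, Complex.re_ofNat,
    Complex.im_ofNat, zero_mul, sub_zero] at h₁ h₂
  rw [show expectation A ψ = e.re from rfl, abs_le]
  constructor <;> linarith

lemma exists_common_eigenvector_of_involutive {R n ι : Type*} [CommRing R] [Nontrivial R]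
    [Fintype n] [DecidableEq n] [Nonempty n] [DecidableEq ι] (S : ι → Matrix n n R) (I : Finset ι)
    (hinv : ∀ i ∈ I, S i * S i = 1) (hcomm : ∀ i ∈ I, ∀ j ∈ I, S i * S j = S j * S i) :
    ∃ ψ : n → R, ψ ≠ 0 ∧ ∀ i ∈ I, S i *ᵥ ψ = ψ ∨ S i *ᵥ ψ = -ψ := by
  induction I using Finset.induction with
  | empty => simpa using exists_ne (0 : n → R)
  | @insert j I _ ih =>
    obtain ⟨ψ, hψ, hev⟩ := ih (fun i hi => hinv i (Finset.mem_insert_of_mem hi))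
      (fun i hi k hk => hcomm i (Finset.mem_insert_of_mem hi) k (Finset.mem_insert_of_mem hk))
    have hjj : S j * S j = 1 := hinv j (Finset.mem_insert_self j I)
    -- `ψ + S j ψ` is a `+1`-eigenvector of `S j`, unless it vanishes and `ψ` is a `-1`-eigenvector.
    by_cases hφ : ψ + S j *ᵥ ψ = 0
    · refine ⟨ψ, hψ, fun i hi => ?_⟩
      rcases Finset.mem_insert.mp hi with rfl | hi
      · right; linear_combination (norm := module) hφ
      · exact hev i hi
    · refine ⟨ψ + S j *ᵥ ψ, hφ, fun i hi => ?_⟩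
      rcases Finset.mem_insert.mp hi with rfl | hi
      · left; rw [mulVec_add, mulVec_mulVec, hjj, one_mulVec, add_comm]
      · have hc : S i *ᵥ (S j *ᵥ ψ) = S j *ᵥ (S i *ᵥ ψ) := by
          rw [mulVec_mulVec, mulVec_mulVec,
            hcomm i (Finset.mem_insert_of_mem hi) j (Finset.mem_insert_self j I)]
        rcases hev i hi with h | h
        · left; rw [mulVec_add, hc, h]
        · right; rw [mulVec_add, hc, h, mulVec_neg, neg_add]

lemma exists_smul_dotProduct_star_self_eq_one {n : Type*} [Fintype n] {ψ : n → ℂ} (hψ : ψ ≠ 0) :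
    ∃ c : ℂ, star (c • ψ) ⬝ᵥ (c • ψ) = 1 := by
  obtain ⟨r, hr, hψr⟩ := RCLike.pos_iff_exists_ofReal.1 (dotProduct_star_self_pos_iff.2 hψ)
  replace hψr : star ψ ⬝ᵥ ψ = (r : ℂ) := hψr.symm
  refine ⟨((√r)⁻¹ : ℝ), ?_⟩
  rw [star_smul, smul_dotProduct, dotProduct_smul, hψr, smul_eq_mul, smul_eq_mul,
    Complex.star_def, Complex.conj_ofReal]
  have hs : (√r)⁻¹ * ((√r)⁻¹ * r) = 1 := by
    field_simp
    exact (Real.sq_sqrt hr.le).symm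
  exact_mod_cast hs

lemma expectation_sq_eq_one_of_mulVec_eq_or {d : ℕ} {A : Matrix (Fin d) (Fin d) ℂ}
    {ψ : Fin d → ℂ} (hψ : star ψ ⬝ᵥ ψ = 1) (h : A *ᵥ ψ = ψ ∨ A *ᵥ ψ = -ψ) :
    expectation A ψ ^ 2 = 1 := by
  rcases h with h | h <;> simp [expectation, h, hψ]

section BetaVal

variable {V : Type*} [Fintype V] {d : ℕ} {S : V → Matrix (Fin d) (Fin d) ℂ} {w : V → ℝ}

lemma le_betaVal (hherm : ∀ i, (S i).IsHermitian) (hinv : ∀ i, S i * S i = 1)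
    (hw : ∀ i, 0 ≤ w i) {ψ : Fin d → ℂ} (hψ : star ψ ⬝ᵥ ψ = 1) :
    ∑ i, w i * expectation (S i) ψ ^ 2 ≤ betaVal S w := by
  refine le_csSup ⟨∑ i, w i, ?_⟩ ⟨ψ, hψ, rfl⟩
  rintro r ⟨φ, hφ, rfl⟩
  refine Finset.sum_le_sum fun i _ => mul_le_of_le_one_right (hw i) ?_
  exact (sq_le_one_iff_abs_le_one _).2 (abs_expectation_le_one (hherm i) (hinv i) hφ)

lemma betaVal_le (hd : 1 ≤ d) {b : ℝ}
    (h : ∀ ψ : Fin d → ℂ, star ψ ⬝ᵥ ψ = 1 → ∑ i, w i * expectation (S i) ψ ^ 2 ≤ b) :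
    betaVal S w ≤ b := by
  have hψ : star (Pi.single ⟨0, hd⟩ 1 : Fin d → ℂ) ⬝ᵥ Pi.single ⟨0, hd⟩ 1 = 1 := by simp
  refine csSup_le ⟨_, _, hψ, rfl⟩ ?_
  rintro r ⟨φ, hφ, rfl⟩
  exact h φ hφ

end BetaVal

section AlphaW

variable {V : Type*} [Fintype V] (G : SimpleGraph V) (w : V → ℝ)

lemma exists_isIndepSet_alphaW_eq :
    ∃ I : Finset V, IsIndepSet G I ∧ alphaW G w = ∑ i ∈ I, w i := by
  have hfin : {r : ℝ | ∃ I : Finset V, IsIndepSet G I ∧ r = ∑ i ∈ I, w i}.Finite :=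
    (Set.finite_range fun I : Finset V => ∑ i ∈ I, w i).subset fun _ ⟨I, _, hr⟩ => ⟨I, hr.symm⟩
  exact Set.Nonempty.csSup_mem
    (by exact ⟨0, ∅, fun _ h => absurd h (Finset.notMem_empty _), rfl⟩) hfin

variable {G} {w}

lemma le_alphaW {I : Finset V} (hI : IsIndepSet G I) : ∑ i ∈ I, w i ≤ alphaW G w := by
  refine le_csSup ⟨∑ i, max (w i) 0, ?_⟩ ⟨I, hI, rfl⟩
  rintro r ⟨J, -, rfl⟩
  exact (Finset.sum_le_sum fun i _ => le_max_left _ _).trans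
    (Finset.sum_le_sum_of_subset_of_nonneg J.subset_univ fun i _ _ => le_max_right _ _)

end AlphaW

lemma IsRealization.comap {V W : Type*} {G : SimpleGraph V} {H : SimpleGraph W} {d : ℕ}
    {S : V → Matrix (Fin d) (Fin d) ℂ} (hS : IsRealization G d S) (f : H ↪g G) :
    IsRealization H d (S ∘ f) :=
  ⟨fun _ => hS.1 _, fun _ => hS.2.1 _, fun _ _ h => hS.2.2.1 _ _ (f.map_adj_iff.2 h),
    fun _ _ hne h => hS.2.2.2 _ _ (f.injective.ne hne) (mt f.map_adj_iff.1 h)⟩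

lemma alphaW_le_betaVal {V : Type*} [Fintype V] {G : SimpleGraph V} {d : ℕ} (hd : 1 ≤ d)
    {S : V → Matrix (Fin d) (Fin d) ℂ} (hS : IsRealization G d S)
    {w : V → ℝ} (hw : ∀ i, 0 ≤ w i) :
    alphaW G w ≤ betaVal S w := by
  classical
  obtain ⟨I, hI, hα⟩ := exists_isIndepSet_alphaW_eq G w
  have : NeZero d := ⟨by omega⟩
  obtain ⟨ψ₀, hψ₀, hev₀⟩ := exists_common_eigenvector_of_involutive S I (fun i _ => hS.2.1 i)
    fun i hi j hj => (eq_or_ne i j).elim (fun h => h ▸ rfl) fun h => hS.2.2.2 i j h (hI i hi j hj)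
  obtain ⟨c, hψ⟩ := exists_smul_dotProduct_star_self_eq_one hψ₀
  have hev : ∀ i ∈ I, expectation (S i) (c • ψ₀) ^ 2 = 1 := fun i hi =>
    expectation_sq_eq_one_of_mulVec_eq_or hψ <| by
      rw [mulVec_smul]
      exact (hev₀ i hi).imp (congrArg _) fun h => by rw [h, smul_neg]
  calc alphaW G w = ∑ i ∈ I, w i * expectation (S i) (c • ψ₀) ^ 2 := by
        rw [hα]; exact Finset.sum_congr rfl fun i hi => by rw [hev i hi, mul_one]
    _ ≤ ∑ i, w i * expectation (S i) (c • ψ₀) ^ 2 :=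
        Finset.sum_le_sum_of_subset_of_nonneg I.subset_univ fun i _ _ =>
          mul_nonneg (hw i) (sq_nonneg _)
    _ ≤ betaVal S w := le_betaVal hS.1 hS.2.1 hw hψ

lemma betaVal_le_add {V₁ V₂ : Type*} [Fintype V₁] [Fintype V₂] {d : ℕ} (hd : 1 ≤ d)
    {S : V₁ ⊕ V₂ → Matrix (Fin d) (Fin d) ℂ} (hherm : ∀ i, (S i).IsHermitian)
    (hinv : ∀ i, S i * S i = 1) {w : V₁ ⊕ V₂ → ℝ} (hw : ∀ i, 0 ≤ w i) :
    betaVal S w ≤ betaVal (S ∘ Sum.inl) (w ∘ Sum.inl) + betaVal (S ∘ Sum.inr) (w ∘ Sum.inr) :=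
  betaVal_le hd fun _ hψ => by
    rw [Fintype.sum_sum_type]
    exact add_le_add (le_betaVal (fun _ => hherm _) (fun _ => hinv _) (fun _ => hw _) hψ)
      (le_betaVal (fun _ => hherm _) (fun _ => hinv _) (fun _ => hw _) hψ)

section DisjointUnion

variable {V₁ V₂ : Type*} {G₁ : SimpleGraph V₁} {G₂ : SimpleGraph V₂} {G : SimpleGraph (V₁ ⊕ V₂)}
  (hll : ∀ a b, G.Adj (Sum.inl a) (Sum.inl b) ↔ G₁.Adj a b)
  (hrr : ∀ a b, G.Adj (Sum.inr a) (Sum.inr b) ↔ G₂.Adj a b)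
  (hlr : ∀ a b, ¬G.Adj (Sum.inl a) (Sum.inr b))
include hll hrr hlr

lemma IsIndepSet.disjSum {I₁ : Finset V₁} {I₂ : Finset V₂} (h₁ : IsIndepSet G₁ I₁)
    (h₂ : IsIndepSet G₂ I₂) : IsIndepSet G (I₁.disjSum I₂) := by
  rintro (a | a) ha (b | b) hb <;>
    simp only [Finset.inl_mem_disjSum, Finset.inr_mem_disjSum] at ha hb
  · rw [hll]; exact h₁ a ha b hb
  · exact hlr a b
  · exact fun h => hlr b a h.symm
  · rw [hrr]; exact h₂ a ha b hb

lemma alphaW_add_alphaW_le [Fintype V₁] [Fintype V₂] (w : V₁ ⊕ V₂ → ℝ) :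
    alphaW G₁ (w ∘ Sum.inl) + alphaW G₂ (w ∘ Sum.inr) ≤ alphaW G w := by
  obtain ⟨I₁, hI₁, hα₁⟩ := exists_isIndepSet_alphaW_eq G₁ (w ∘ Sum.inl)
  obtain ⟨I₂, hI₂, hα₂⟩ := exists_isIndepSet_alphaW_eq G₂ (w ∘ Sum.inr)
  rw [hα₁, hα₂]
  exact Finset.sum_disjSum I₁ I₂ w ▸ le_alphaW (hI₁.disjSum hll hrr hlr hI₂)

end DisjointUnion

/-- The fully disconnected disjoint union of two ħ-perfect graphs is ħ-perfect. -/
theorem stmt_3 {V₁ V₂ : Type*} [Fintype V₁] [Fintype V₂]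
    (G₁ : SimpleGraph V₁) (G₂ : SimpleGraph V₂) (G : SimpleGraph (V₁ ⊕ V₂))
    (hll : ∀ a b, G.Adj (Sum.inl a) (Sum.inl b) ↔ G₁.Adj a b)
    (hrr : ∀ a b, G.Adj (Sum.inr a) (Sum.inr b) ↔ G₂.Adj a b)
    (hlr : ∀ a b, ¬G.Adj (Sum.inl a) (Sum.inr b))
    (h₁ : HbarPerfect G₁) (h₂ : HbarPerfect G₂) :
    HbarPerfect G := by
  intro d hd S hS w hw
  have hS₁ : IsRealization G₁ d (S ∘ Sum.inl) :=
    hS.comap ⟨⟨Sum.inl, Sum.inl_injective⟩, hll _ _⟩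
  have hS₂ : IsRealization G₂ d (S ∘ Sum.inr) :=
    hS.comap ⟨⟨Sum.inr, Sum.inr_injective⟩, hrr _ _⟩
  refine le_antisymm ?_ (alphaW_le_betaVal hd hS hw)
  calc betaVal S w
      ≤ betaVal (S ∘ Sum.inl) (w ∘ Sum.inl) + betaVal (S ∘ Sum.inr) (w ∘ Sum.inr) :=
        betaVal_le_add hd hS.1 hS.2.1 hw
    _ = alphaW G₁ (w ∘ Sum.inl) + alphaW G₂ (w ∘ Sum.inr) := by
        rw [h₁ d hd _ hS₁ (w ∘ Sum.inl) fun _ => hw _, h₂ d hd _ hS₂ (w ∘ Sum.inr) fun _ => hw _]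
    _ ≤ alphaW G w := alphaW_add_alphaW_le hll hrr hlr w
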